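/- arXiv:2006.06472 — 2 statements merged into one kernel-verified Lean document; each statement's English description precedes it below -/
import Mathlib

section
/- Let A be an abelian category, k ≥ 1, and let X: ⋯ → X_{k+1} → X_k → X_{k−1} → ⋯ → X_1 → C → 0 be an exact complex in A. Suppose Y: 0 → A → Y_{k−1} → ⋯ → Y_1 → C → 0 and Z: 0 → A → Z_{k−1} → ⋯ → Z_1 → C → 0 are two k-fold extensions of C by A, and that there exist morphisms of complexes X → Y and X → Z which are the identity on C and which induce the same morphism f: X_k → A in degree k. Then Y and Z are Yoneda equivalent k-fold extensions of C by A. -/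
open CategoryTheory CategoryTheory.Limits

universe v u

namespace YonedaExtension

variable {𝒜 : Type u} [Category.{v} 𝒜] [Abelian 𝒜]

/-- The data of a candidate extension of `C` by `A` of length `m`: a `ℕ`-indexed chain
complex `E` with `E.X 0 ≅ C`, `E.X m ≅ A` and `E.X i = 0` for `i > m`, i.e. a complex
`0 → A → E.X (m-1) → ⋯ → E.X 1 → C → 0`. -/
structure ExtSeq (m : ℕ) (C A : 𝒜) where
  E : ChainComplex 𝒜 ℕ
  isoC : E.X 0 ≅ C
  isoA : E.X m ≅ A
  isZero : ∀ i, m < i → Limits.IsZero (E.X i)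

/-- The candidate extension is exact (everywhere, which includes the injectivity of
`A → E.X (m-1)` and the surjectivity of `E.X 1 → C`). -/
def ExtSeq.IsExtension {m : ℕ} {C A : 𝒜} (S : ExtSeq m C A) : Prop :=
  ∀ i, S.E.ExactAt i

/-- There is a morphism of extensions `S → T` which is the identity on `A` and on `C`. -/
def ExtSeq.Dominates {m : ℕ} {C A : 𝒜} (S T : ExtSeq m C A) : Prop :=
  ∃ φ : S.E ⟶ T.E, φ.f 0 = S.isoC.hom ≫ T.isoC.inv ∧ φ.f m = S.isoA.hom ≫ T.isoA.inv

/-- Yoneda equivalence of `m`-fold extensions of `C` by `A`: the equivalence relation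
generated by the existence of a morphism of extensions which is the identity
on `A` and on `C`. -/
def YonedaEquiv {m : ℕ} {C A : 𝒜} (S T : ExtSeq m C A) : Prop :=
  Relation.EqvGen
    (fun S' T' : ExtSeq m C A => S'.IsExtension ∧ T'.IsExtension ∧ S'.Dominates T') S T

/-!
For `k = m + 2 ≥ 2`, push the truncation `X_k → X_{k-1} → ⋯ → X_0` out along `f : X_k → A`;
this gives the `k`-fold extension `0 → A → A ⊔_{X_k} X_{k-1} → X_{k-2} → ⋯ → X_0 → 0`.
It is exact because `X` is, and because `f` kills the image of `X_{k+1}`, which maps to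
`Y_{k+1} = 0`. The maps `X → Y` and `X → Z` agree with `f` in degree `k`, so both factor
through it: it dominates both `Y` and `Z`. For `k = 1` an extension is an isomorphism
`A ≅ C`, and the two isomorphisms agree after precomposition with `f`, which is an
epimorphism because `X_1 → C` is.
-/

section Abelian

variable {X A : 𝒜}

lemma exact_of_eqToHom_conj {S T : ShortComplex 𝒜} (hT : T.Exact)
    (e₁ : S.X₁ = T.X₁) (e₂ : S.X₂ = T.X₂) (e₃ : S.X₃ = T.X₃)
    (hf : S.f = eqToHom e₁ ≫ T.f ≫ eqToHom e₂.symm)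
    (hg : S.g = eqToHom e₂ ≫ T.g ≫ eqToHom e₃.symm) : S.Exact :=
  ShortComplex.exact_of_iso
    (ShortComplex.isoMk (eqToIso e₁.symm) (eqToIso e₂.symm) (eqToIso e₃.symm)
      (by simp [hf]) (by simp [hg])) hT

lemma exact_of_exact_of_f_factors {S : ShortComplex 𝒜} (hS : S.Exact)
    (a : S.X₁ ⟶ X) (q : X ⟶ S.X₂) (ha : a ≫ q = S.f) (hq : q ≫ S.g = 0) :
    (ShortComplex.mk q S.g hq).Exact := by
  rw [ShortComplex.exact_iff_exact_up_to_refinements]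
  intro T x hx
  obtain ⟨T', π, _, y, hy⟩ := hS.exact_up_to_refinements x hx
  exact ⟨T', π, inferInstance, y ≫ a, by simpa [← ha] using hy⟩

lemma mono_pushout_inl_of_exact {S : ShortComplex 𝒜} (hS : S.Exact)
    (f : S.X₂ ⟶ A) (hf : S.f ≫ f = 0) : Mono (pushout.inl f S.g) := by
  refine Preadditive.mono_of_cancel_zero _ fun {T} x hx => ?_
  have hsq : (ShortComplex.mk (biprod.lift f (-S.g))
      (biprod.desc (pushout.inl f S.g) (pushout.inr f S.g))
      (by simp [pushout.condition])).Exact :=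
    (IsPushout.of_hasPushout f S.g).exact_shortComplex
  obtain ⟨T₁, π₁, _, y, hy⟩ := hsq.exact_up_to_refinements (biprod.lift x 0) (by
    dsimp; rw [biprod.lift_desc, hx, zero_comp, add_zero])
  have hyx : π₁ ≫ x = y ≫ f := by simpa using hy =≫ biprod.fst
  have hyg : y ≫ S.g = 0 := by simpa using (hy =≫ biprod.snd).symm
  obtain ⟨T₂, π₂, _, z, hz⟩ := hS.exact_up_to_refinements y hyg
  rw [← cancel_epi π₁, ← cancel_epi π₂, hyx, reassoc_of% hz]
  simp [hf]

lemma exact_pushout_inl_desc {S : ShortComplex 𝒜} (hS : S.Exact) (f : S.X₁ ⟶ A) :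
    (ShortComplex.mk (pushout.inl f S.f) (pushout.desc 0 S.g (by simp))
      (pushout.inl_desc _ _ _)).Exact := by
  rw [ShortComplex.exact_iff_exact_up_to_refinements]
  intro T x hx
  obtain ⟨T₁, π₁, _, a, b, hab⟩ :=
    (IsPushout.of_hasPushout f S.f).hom_eq_add_up_to_refinements x
  have hb : b ≫ S.g = 0 := by
    have h := hab =≫ pushout.desc 0 S.g (by simp)
    rwa [Category.assoc, hx, comp_zero, Preadditive.add_comp, Category.assoc, Category.assoc,
      pushout.inl_desc, pushout.inr_desc, comp_zero, zero_add, eq_comm] at h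
  obtain ⟨T₂, π₂, _, c, hc⟩ := hS.exact_up_to_refinements b hb
  refine ⟨T₂, π₂ ≫ π₁, inferInstance, π₂ ≫ a + c ≫ f, ?_⟩
  dsimp at hc ⊢
  rw [Category.assoc, hab, Preadditive.comp_add, Preadditive.add_comp, reassoc_of% hc,
    ← pushout.condition, Category.assoc, Category.assoc]

end Abelian

lemma exactAt_iff_sc'_pred (K : ChainComplex 𝒜 ℕ) (j : ℕ) :
    K.ExactAt j ↔ (K.sc' (j + 1) j (j - 1)).Exact :=
  K.exactAt_iff' _ _ _ (by simp) (by cases j <;> simp)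

namespace PushoutExt

open ZeroObject

variable (m : ℕ) (W : ChainComplex 𝒜 ℕ) {A : 𝒜} (f : W.X (m + 2) ⟶ A)

noncomputable def obj (i : ℕ) : 𝒜 :=
  if i ≤ m then W.X i
  else if i = m + 1 then pushout f (W.d (m + 2) (m + 1))
  else if i = m + 2 then A
  else 0

lemma obj_of_le {i : ℕ} (h : i ≤ m) : obj m W f i = W.X i := by simp [obj, h]

lemma obj_succ : obj m W f (m + 1) = pushout f (W.d (m + 2) (m + 1)) := by simp [obj]

lemma obj_add_two : obj m W f (m + 2) = A := by simp [obj]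

lemma isZero_obj {i : ℕ} (h : m + 2 < i) : IsZero (obj m W f i) := by
  simpa [obj, show ¬i ≤ m by omega, show i ≠ m + 1 by omega, show i ≠ m + 2 by omega]
    using isZero_zero 𝒜

noncomputable def toW : pushout f (W.d (m + 2) (m + 1)) ⟶ W.X m :=
  pushout.desc 0 (W.d (m + 1) m) (by simp)

@[simp]
lemma inl_toW : pushout.inl f (W.d (m + 2) (m + 1)) ≫ toW m W f = 0 := pushout.inl_desc _ _ _

@[simp]
lemma inr_toW : pushout.inr f (W.d (m + 2) (m + 1)) ≫ toW m W f = W.d (m + 1) m :=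
  pushout.inr_desc _ _ _

@[simp]
lemma toW_d (k : ℕ) : toW m W f ≫ W.d m k = 0 := by
  ext <;> simp [← Category.assoc]

noncomputable def d (n : ℕ) : obj m W f (n + 1) ⟶ obj m W f n :=
  if h : n + 1 ≤ m then
    eqToHom (obj_of_le m W f h) ≫ W.d (n + 1) n ≫ eqToHom (obj_of_le m W f (by omega)).symm
  else if h : n = m then
    eqToHom (by rw [h, obj_succ]) ≫ toW m W f ≫ eqToHom (by rw [h, obj_of_le m W f le_rfl])
  else if h : n = m + 1 then
    eqToHom (by rw [h, obj_add_two]) ≫ pushout.inl f (W.d (m + 2) (m + 1)) ≫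
      eqToHom (by rw [h, obj_succ])
  else 0

lemma d_of_lt {n : ℕ} (h : n + 1 ≤ m) :
    d m W f n = eqToHom (obj_of_le m W f h) ≫ W.d (n + 1) n ≫
      eqToHom (obj_of_le m W f (by omega)).symm := by
  rw [d, dif_pos h]

lemma d_self : d m W f m =
    eqToHom (obj_succ m W f) ≫ toW m W f ≫ eqToHom (obj_of_le m W f le_rfl).symm := by
  rw [d, dif_neg (by omega), dif_pos rfl]

lemma d_succ : d m W f (m + 1) =
    eqToHom (obj_add_two m W f) ≫ pushout.inl f (W.d (m + 2) (m + 1)) ≫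
      eqToHom (obj_succ m W f).symm := by
  rw [d, dif_neg (by omega), dif_neg (by omega), dif_pos rfl]

lemma d_comp_d (n : ℕ) : d m W f (n + 1) ≫ d m W f n = 0 := by
  obtain h | rfl | rfl | h : n + 2 ≤ m ∨ n + 1 = m ∨ n = m ∨ m < n := by omega
  · simp [d_of_lt m W f h, d_of_lt m W f (show n + 1 ≤ m by omega)]
  · simp [d_self, d_of_lt _ W f le_rfl, reassoc_of% toW_d]
  · simp [d_succ, d_self, reassoc_of% inl_toW]
  · exact (isZero_obj m W f (by omega)).eq_of_src _ _

noncomputable def complex : ChainComplex 𝒜 ℕ :=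
  ChainComplex.of (obj m W f) (d m W f) (d_comp_d m W f)

lemma complex_X_of_le {i : ℕ} (h : i ≤ m) : (complex m W f).X i = W.X i := obj_of_le m W f h

lemma complex_X_succ : (complex m W f).X (m + 1) = pushout f (W.d (m + 2) (m + 1)) :=
  obj_succ m W f

lemma complex_X_add_two : (complex m W f).X (m + 2) = A := obj_add_two m W f

lemma isZero_complex_X {i : ℕ} (h : m + 2 < i) : IsZero ((complex m W f).X i) :=
  isZero_obj m W f h

lemma complex_d_of_le {i j : ℕ} (hi : i ≤ m) (hj : j ≤ m) : (complex m W f).d i j =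
    eqToHom (complex_X_of_le m W f hi) ≫ W.d i j ≫ eqToHom (complex_X_of_le m W f hj).symm := by
  by_cases h : j + 1 = i
  · subst h
    exact (ChainComplex.of_d _ _ j).trans (d_of_lt m W f hi)
  · rw [(complex m W f).shape i j (by simpa using h), W.shape i j (by simpa using h)]
    simp only [zero_comp, comp_zero]

lemma complex_d_self : (complex m W f).d (m + 1) m =
    eqToHom (complex_X_succ m W f) ≫ toW m W f ≫ eqToHom (complex_X_of_le m W f le_rfl).symm :=
  (ChainComplex.of_d _ _ m).trans (d_self m W f)

lemma complex_d_succ : (complex m W f).d (m + 2) (m + 1) =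
    eqToHom (complex_X_add_two m W f) ≫ pushout.inl f (W.d (m + 2) (m + 1)) ≫
      eqToHom (complex_X_succ m W f).symm :=
  (ChainComplex.of_d _ _ (m + 1)).trans (d_succ m W f)

noncomputable def extSeq : ExtSeq (m + 2) (W.X 0) A where
  E := complex m W f
  isoC := eqToIso (complex_X_of_le m W f (Nat.zero_le m))
  isoA := eqToIso (complex_X_add_two m W f)
  isZero _ := isZero_complex_X m W f

lemma isExtension_extSeq (hW : ∀ i, W.ExactAt i) (hf : W.d (m + 3) (m + 2) ≫ f = 0) :
    (extSeq m W f).IsExtension := by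
  intro i
  change (complex m W f).ExactAt i
  obtain h | rfl | rfl | rfl | h :
    i < m ∨ i = m ∨ i = m + 1 ∨ i = m + 2 ∨ m + 2 < i := by omega
  · rw [exactAt_iff_sc'_pred]
    exact exact_of_eqToHom_conj ((exactAt_iff_sc'_pred W i).1 (hW i)) (complex_X_of_le m W f h)
      (complex_X_of_le m W f h.le) (complex_X_of_le m W f (by omega))
      (complex_d_of_le m W f h h.le) (complex_d_of_le m W f h.le (by omega))
  · rw [exactAt_iff_sc'_pred]
    exact exact_of_eqToHom_conj
      (exact_of_exact_of_f_factors ((exactAt_iff_sc'_pred W i).1 (hW i)) _ _ (inr_toW i W f)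
        (toW_d i W f _))
      (complex_X_succ i W f) (complex_X_of_le i W f le_rfl) (complex_X_of_le i W f (by omega))
      (complex_d_self i W f) (complex_d_of_le i W f le_rfl (by omega))
  · rw [(complex m W f).exactAt_iff' (m + 2) (m + 1) m (by simp) (by simp)]
    exact exact_of_eqToHom_conj
      (exact_pushout_inl_desc
        ((W.exactAt_iff' (m + 2) (m + 1) m (by simp) (by simp)).1 (hW _)) f)
      (complex_X_add_two m W f) (complex_X_succ m W f) (complex_X_of_le m W f le_rfl)
      (complex_d_succ m W f) (complex_d_self m W f)
  · rw [(complex m W f).exactAt_iff' (m + 3) (m + 2) (m + 1) (by simp) (by simp),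
      ShortComplex.exact_iff_mono _ ((isZero_complex_X m W f (by omega)).eq_of_src _ _)]
    have : Mono (pushout.inl f (W.d (m + 2) (m + 1))) := mono_pushout_inl_of_exact
      ((W.exactAt_iff' (m + 3) (m + 2) (m + 1) (by simp) (by simp)).1 (hW _)) f hf
    change Mono ((complex m W f).d (m + 2) (m + 1))
    rw [complex_d_succ]
    infer_instance
  · exact .of_isZero (isZero_complex_X m W f h)

variable {m W f} (T : ExtSeq (m + 2) (W.X 0) A) (φ : W ⟶ T.E)

noncomputable def descToExt (hφ : φ.f (m + 2) ≫ T.isoA.hom = f) :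
    pushout f (W.d (m + 2) (m + 1)) ⟶ T.E.X (m + 1) :=
  pushout.desc (T.isoA.inv ≫ T.E.d (m + 2) (m + 1)) (φ.f (m + 1)) (by simp [← hφ])

noncomputable def toExtF (hφ : φ.f (m + 2) ≫ T.isoA.hom = f) (i : ℕ) :
    (complex m W f).X i ⟶ T.E.X i :=
  if h : i ≤ m then eqToHom (complex_X_of_le m W f h) ≫ φ.f i
  else if h : i = m + 1 then
    eqToHom (by rw [h, complex_X_succ]) ≫ descToExt T φ hφ ≫ eqToHom (by rw [h])
  else if h : i = m + 2 then
    eqToHom (by rw [h, complex_X_add_two]) ≫ T.isoA.inv ≫ eqToHom (by rw [h])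
  else 0

lemma inl_descToExt (hφ : φ.f (m + 2) ≫ T.isoA.hom = f) :
    pushout.inl f (W.d (m + 2) (m + 1)) ≫ descToExt T φ hφ =
      T.isoA.inv ≫ T.E.d (m + 2) (m + 1) :=
  pushout.inl_desc _ _ _

lemma descToExt_d (hφ : φ.f (m + 2) ≫ T.isoA.hom = f) :
    descToExt T φ hφ ≫ T.E.d (m + 1) m = toW m W f ≫ φ.f m := by
  ext
  · rw [reassoc_of% inl_descToExt, reassoc_of% inl_toW]
    simp
  · rw [descToExt, toW, pushout.inr_desc_assoc, pushout.inr_desc_assoc, φ.comm]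

lemma toExtF_of_le (hφ : φ.f (m + 2) ≫ T.isoA.hom = f) {i : ℕ} (h : i ≤ m) :
    toExtF T φ hφ i = eqToHom (complex_X_of_le m W f h) ≫ φ.f i := by
  rw [toExtF, dif_pos h]

lemma toExtF_succ (hφ : φ.f (m + 2) ≫ T.isoA.hom = f) :
    toExtF T φ hφ (m + 1) = eqToHom (complex_X_succ m W f) ≫ descToExt T φ hφ := by
  rw [toExtF, dif_neg (by omega), dif_pos rfl]
  simp

lemma toExtF_add_two (hφ : φ.f (m + 2) ≫ T.isoA.hom = f) :
    toExtF T φ hφ (m + 2) = eqToHom (complex_X_add_two m W f) ≫ T.isoA.inv := by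
  rw [toExtF, dif_neg (by omega), dif_neg (by omega), dif_pos rfl]
  simp

noncomputable def toExt (hφ : φ.f (m + 2) ≫ T.isoA.hom = f) : complex m W f ⟶ T.E where
  f := toExtF T φ hφ
  comm' := by
    rintro i j (rfl : j + 1 = i)
    obtain h | rfl | rfl | h : j + 1 ≤ m ∨ j = m ∨ j = m + 1 ∨ m + 2 ≤ j := by omega
    · simp [toExtF_of_le T φ hφ h, toExtF_of_le T φ hφ (show j ≤ m by omega),
        complex_d_of_le m W f h (show j ≤ m by omega)]
    · rw [toExtF_succ, toExtF_of_le T φ hφ le_rfl, complex_d_self]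
      simp [descToExt_d]
    · rw [toExtF_add_two, toExtF_succ, complex_d_succ]
      simp [inl_descToExt]
    · exact (isZero_complex_X m W f (by omega)).eq_of_src _ _

lemma extSeq_dominates (hφ : φ.f (m + 2) ≫ T.isoA.hom = f) (hφ₀ : φ.f 0 = T.isoC.inv) :
    (extSeq m W f).Dominates T :=
  ⟨toExt T φ hφ, (toExtF_of_le T φ hφ (Nat.zero_le m)).trans (by rw [hφ₀]; rfl),
    toExtF_add_two T φ hφ⟩

end PushoutExt

lemma epi_d_one_zero (K : ChainComplex 𝒜 ℕ) (hK : K.ExactAt 0) : Epi (K.d 1 0) :=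
  (ShortComplex.exact_iff_epi _ (K.shape 0 0 (by simp))).1
    ((K.exactAt_iff' 1 0 0 (by simp) (by simp)).1 hK)

namespace ExtSeq

variable {W : ChainComplex 𝒜 ℕ} {C A : 𝒜}

lemma d_comp_f_eq_zero {m : ℕ} (T : ExtSeq m C A) (φ : W ⟶ T.E) :
    W.d (m + 1) m ≫ φ.f m = 0 := by
  rw [← φ.comm, (T.isZero (m + 1) (by omega)).eq_of_src (T.E.d _ _) 0, comp_zero]

noncomputable def connecting (S : ExtSeq 1 C A) : A ⟶ C := S.isoA.inv ≫ S.E.d 1 0 ≫ S.isoC.hom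

lemma isIso_connecting {S : ExtSeq 1 C A} (hS : S.IsExtension) : IsIso S.connecting := by
  have : Mono (S.E.d 1 0) :=
    (ShortComplex.exact_iff_mono _ ((S.isZero 2 (by omega)).eq_of_src _ _)).1
      ((S.E.exactAt_iff' 2 1 0 (by simp) (by simp)).1 (hS 1))
  have := epi_d_one_zero S.E (hS 0)
  have := isIso_of_mono_of_epi (S.E.d 1 0)
  unfold connecting
  infer_instance

lemma dominates_of_connecting_eq {S T : ExtSeq 1 C A} (h : S.connecting = T.connecting) :
    S.Dominates T := by
  refine ⟨{ f := fun
              | 0 => S.isoC.hom ≫ T.isoC.inv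
              | 1 => S.isoA.hom ≫ T.isoA.inv
              | _ + 2 => 0
            comm' := ?_ }, rfl, rfl⟩
  rintro _ (_ | j) rfl
  · simpa [connecting] using (S.isoA.hom ≫= h =≫ T.isoC.inv).symm
  · exact (S.isZero (j + 2) (by omega)).eq_of_src _ _

lemma comp_connecting (S : ExtSeq 1 (W.X 0) A) (φ : W ⟶ S.E) (hφ : φ.f 0 = S.isoC.inv) :
    (φ.f 1 ≫ S.isoA.hom) ≫ S.connecting = W.d 1 0 := by
  simp [connecting, hφ]

lemma dominates_of_length_one [Epi (W.d 1 0)] {S T : ExtSeq 1 (W.X 0) A}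
    (hS : S.IsExtension) (φ : W ⟶ S.E) (ψ : W ⟶ T.E)
    (hφ : φ.f 0 = S.isoC.inv) (hψ : ψ.f 0 = T.isoC.inv)
    (hsame : φ.f 1 ≫ S.isoA.hom = ψ.f 1 ≫ T.isoA.hom) : S.Dominates T := by
  have := isIso_connecting hS
  have hφS := S.comp_connecting φ hφ
  have hψT := T.comp_connecting ψ hψ
  have : Epi (φ.f 1 ≫ S.isoA.hom) := by
    rw [← Category.comp_id (φ.f 1 ≫ S.isoA.hom), ← IsIso.hom_inv_id S.connecting,
      ← Category.assoc, hφS]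
    infer_instance
  rw [← hsame] at hψT
  exact dominates_of_connecting_eq ((cancel_epi _).1 (hφS.trans hψT.symm))

end ExtSeq

lemma yonedaEquiv_of_dominates {m : ℕ} {C A : 𝒜} {S T U : ExtSeq m C A}
    (hS : S.IsExtension) (hT : T.IsExtension) (hU : U.IsExtension)
    (hST : S.Dominates T) (hSU : S.Dominates U) : YonedaEquiv T U :=
  .trans _ _ _ (.symm _ _ (.rel _ _ ⟨hS, hT, hST⟩)) (.rel _ _ ⟨hS, hU, hSU⟩)

/-- Let `𝒜` be an abelian category, `k ≥ 1` (here `k = j + 1`), and let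
`X : ⋯ → X_{k+1} → X_k → ⋯ → X_1 → C → 0` be an exact complex in `𝒜` (a `ℕ`-indexed chain
complex `W`, exact everywhere, with `C = W.X 0`). Suppose `Y : 0 → A → Y_{k-1} → ⋯ → Y_1 → C → 0`
and `Z : 0 → A → Z_{k-1} → ⋯ → Z_1 → C → 0` are two k-fold extensions of `C` by `A` (with `A`
placed in degree `k`), and that there exist morphisms of complexes `X → Y` and `X → Z` which
are the identity on `C` and induce the same morphism `f : X_k → A` in degree `k`.
Then `Y` and `Z` are Yoneda equivalent extensions of `C` by `A`. -/
theorem statement3 {𝒜 : Type u} [Category.{v} 𝒜] [Abelian 𝒜] (j : ℕ)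
    (W : ChainComplex 𝒜 ℕ) (hW : ∀ i, W.ExactAt i) (A : 𝒜)
    (Y Z : ExtSeq (j + 1) (W.X 0) A)
    (hY : Y.IsExtension) (hZ : Z.IsExtension)
    (φ : W ⟶ Y.E) (ψ : W ⟶ Z.E)
    (hφC : φ.f 0 = Y.isoC.inv) (hψC : ψ.f 0 = Z.isoC.inv)
    (hsame : φ.f (j + 1) ≫ Y.isoA.hom = ψ.f (j + 1) ≫ Z.isoA.hom) :
    YonedaEquiv Y Z := by
  rcases j with _ | m
  · have := epi_d_one_zero W (hW 0)
    exact .rel _ _ ⟨hY, hZ, ExtSeq.dominates_of_length_one hY φ ψ hφC hψC hsame⟩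
  · have hf : W.d (m + 3) (m + 2) ≫ φ.f (m + 2) ≫ Y.isoA.hom = 0 := by
      rw [reassoc_of% Y.d_comp_f_eq_zero φ, zero_comp]
    exact yonedaEquiv_of_dominates (PushoutExt.isExtension_extSeq m W _ hW hf) hY hZ
      (PushoutExt.extSeq_dominates Y φ rfl hφC) (PushoutExt.extSeq_dominates Z ψ hsame.symm hψC)

end YonedaExtension
end

section
/- Let n be a positive integer and M a small n-abelian category. For a finitely presented functor F ∈ mod-M one has V(F) = 0 if and only if F is effaceable; that is, the kernel of the exact functor V (the full subcategory of objects sent to a zero object) is exactly mod_0-M. -/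
/-!
Since the Yoneda embedding is full, every `F ∈ mod-M` is the cokernel of `Hom(-, g)` for some
`g : Y ⟶ X` in `M`. The functor `V` is right exact, so `V F` is the cokernel of `H̃ g`, which
vanishes iff `H̃ g` is an epimorphism of `L₂(Mᵒᵖ, Ab)`. Every object of `L₂` is a mono functor,
so by Yoneda `H̃` sends epimorphisms to epimorphisms, and being faithful it reflects them.
Hence `V F = 0` iff `g` is an epimorphism, i.e. iff `F` is effaceable.
-/

open CategoryTheory CategoryTheory.Limits

universe w u

namespace HigherAuslander

variable (M : Type u) [SmallCategory M] [Preadditive M]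

/-- `(d^1, …, d^n)` is an `n`-cokernel of `d^0` in the complex
`T : X^0 → X^1 → ⋯ → X^{n+1}`: for every object `Y` the induced sequence
`0 → Hom(X^{n+1}, Y) → ⋯ → Hom(X^0, Y)` of abelian groups is exact. -/
def IsNCokernelSeq {n : ℕ} (T : ComposableArrows M (n + 1)) : Prop :=
  T.IsComplex ∧
  (∀ (Y : M) (g : T.obj' (n + 1) ⟶ Y), T.map' n (n + 1) ≫ g = 0 → g = 0) ∧
  (∀ (i : ℕ), 1 ≤ i → ∀ (hi : i ≤ n), ∀ (Y : M) (g : T.obj' i ⟶ Y),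
    T.map' (i - 1) i ≫ g = 0 → ∃ h : T.obj' (i + 1) ⟶ Y, g = T.map' i (i + 1) ≫ h)

/-- `(d^0, …, d^{n-1})` is an `n`-kernel of `d^n` in the complex
`T : X^0 → X^1 → ⋯ → X^{n+1}`. -/
def IsNKernelSeq {n : ℕ} (T : ComposableArrows M (n + 1)) : Prop :=
  T.IsComplex ∧
  (∀ (Y : M) (g : Y ⟶ T.obj' 0), g ≫ T.map' 0 1 = 0 → g = 0) ∧
  (∀ (i : ℕ), 1 ≤ i → ∀ (hi : i ≤ n), ∀ (Y : M) (g : Y ⟶ T.obj' i),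
    g ≫ T.map' i (i + 1) = 0 → ∃ h : Y ⟶ T.obj' (i - 1), g = h ≫ T.map' (i - 1) i)

/-- An `n`-exact sequence: both a right `n`-exact and a left `n`-exact sequence. -/
def IsNExactSeq {n : ℕ} (T : ComposableArrows M (n + 1)) : Prop :=
  IsNCokernelSeq M T ∧ IsNKernelSeq M T

/-- `M` is an `n`-abelian category. -/
structure IsNAbelian (n : ℕ) : Prop where
  idempotentComplete : IsIdempotentComplete M
  hasNCokernel : ∀ ⦃X Y : M⦄ (f : X ⟶ Y),
    ∃ (T : ComposableArrows M (n + 1)) (eX : T.obj' 0 ≅ X) (eY : T.obj' 1 ≅ Y),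
      T.map' 0 1 = eX.hom ≫ f ≫ eY.inv ∧ IsNCokernelSeq M T
  hasNKernel : ∀ ⦃X Y : M⦄ (f : X ⟶ Y),
    ∃ (T : ComposableArrows M (n + 1)) (eX : T.obj' n ≅ X) (eY : T.obj' (n + 1) ≅ Y),
      T.map' n (n + 1) = eX.hom ≫ f ≫ eY.inv ∧ IsNKernelSeq M T
  nexact_of_mono : ∀ (T : ComposableArrows M (n + 1)),
    IsNCokernelSeq M T → Mono (T.map' 0 1) → IsNExactSeq M T
  nexact_of_epi : ∀ (T : ComposableArrows M (n + 1)),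
    IsNKernelSeq M T → Epi (T.map' n (n + 1)) → IsNExactSeq M T

/-- A mono functor sends epimorphisms of `M` to monomorphisms of abelian groups. -/
def IsMonoFunctor (F : Mᵒᵖ ⥤ AddCommGrpCat.{u}) : Prop :=
  ∀ ⦃X Y : M⦄ (f : X ⟶ Y), Epi f → Mono (F.map f.op)

/-- An absolutely pure functor: an additive mono functor which is a pure subfunctor of
every mono functor containing it (i.e. the quotient by it is always a mono functor). -/
def IsAbsolutelyPure (F : Mᵒᵖ ⥤ AddCommGrpCat.{u}) : Prop :=
  F.Additive ∧ IsMonoFunctor M F ∧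
  ∀ (G : Mᵒᵖ ⥤ AddCommGrpCat.{u}), G.Additive → IsMonoFunctor M G →
    ∀ (ι : F ⟶ G), Mono ι → IsMonoFunctor M (Limits.cokernel ι)

/-- The category `L₂(Mᵒᵖ, Ab)` of absolutely pure functors. -/
abbrev L2Cat := ObjectProperty.FullSubcategory (IsAbsolutelyPure M)

/-- The restricted Yoneda embedding `H̃ : M ⥤ L₂(Mᵒᵖ, Ab)`, defined under the hypothesis
(proved in [EN]) that every representable functor is absolutely pure. -/
def Htilde (hrep : ∀ X : M, IsAbsolutelyPure M (preadditiveYoneda.obj X)) :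
    M ⥤ L2Cat M :=
  ObjectProperty.lift _ preadditiveYoneda hrep

/-- A finitely presented functor: one admitting an exact presentation
`Hom(-, Y) → Hom(-, X) → F → 0`, i.e. `F` is a cokernel of a morphism of representables. -/
def IsFinitelyPresented (F : Mᵒᵖ ⥤ AddCommGrpCat.{u}) : Prop :=
  ∃ (X Y : M) (η : preadditiveYoneda.obj Y ⟶ preadditiveYoneda.obj X),
    Nonempty (F ≅ Limits.cokernel η)

/-- The category `mod-M` of finitely presented functors. -/
abbrev ModCat := ObjectProperty.FullSubcategory (IsFinitelyPresented M)

/-- The Yoneda embedding `M ⥤ mod-M`. -/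
def yonedaMod : M ⥤ ModCat M :=
  ObjectProperty.lift _ preadditiveYoneda
    (fun X => ⟨X, X, 0, ⟨(Limits.cokernelZeroIsoTarget).symm⟩⟩)

/-- An effaceable functor: one admitting a presentation
`Hom(-, Y) → Hom(-, X) → F → 0` with `Y → X` an epimorphism in `M`. -/
def IsEffaceable (F : Mᵒᵖ ⥤ AddCommGrpCat.{u}) : Prop :=
  ∃ (X Y : M) (f : Y ⟶ X), Epi f ∧ Nonempty (F ≅ Limits.cokernel (preadditiveYoneda.map f))

variable {M}

/-- The embedding of `M` into the essential image `ℬ` of `V`, identifying `M` with its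
image under `H̃`. -/
def MtoB (hrep : ∀ X : M, IsAbsolutelyPure M (preadditiveYoneda.obj X))
    (V : ModCat M ⥤ L2Cat M) (e : yonedaMod M ⋙ V ≅ Htilde M hrep) :
    M ⥤ V.EssImageSubcategory :=
  ObjectProperty.lift _ (Htilde M hrep) (fun X => ⟨(yonedaMod M).obj X, ⟨e.app X⟩⟩)

/-- The objects of `ℬ` lying in (the iso-closure of) the image of `M`. -/
def InM (hrep : ∀ X : M, IsAbsolutelyPure M (preadditiveYoneda.obj X))
    (V : ModCat M ⥤ L2Cat M) (e : yonedaMod M ⋙ V ≅ Htilde M hrep)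
    (b : V.EssImageSubcategory) : Prop :=
  ∃ X : M, Nonempty ((MtoB hrep V e).obj X ≅ b)

/-- `P` is an `n`-cluster tilting subcategory of the abelian category `𝒜`:
it is generating, cogenerating, functorially finite, and coincides with the two
`Ext`-orthogonality classes. -/
structure IsNClusterTilting (𝒜 : Type*) [Category 𝒜] [Abelian 𝒜] [HasExt.{w} 𝒜]
    (n : ℕ) (P : 𝒜 → Prop) : Prop where
  generating : ∀ A : 𝒜, ∃ (X : 𝒜) (π : X ⟶ A), P X ∧ Epi π
  cogenerating : ∀ A : 𝒜, ∃ (X : 𝒜) (ι : A ⟶ X), P X ∧ Mono ι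
  leftApprox : ∀ A : 𝒜, ∃ (X : 𝒜) (f : A ⟶ X), P X ∧
    ∀ (X' : 𝒜) (g : A ⟶ X'), P X' → ∃ h : X ⟶ X', f ≫ h = g
  rightApprox : ∀ A : 𝒜, ∃ (X : 𝒜) (f : X ⟶ A), P X ∧
    ∀ (X' : 𝒜) (g : X' ⟶ A), P X' → ∃ h : X' ⟶ X, h ≫ f = g
  mem_iff_ext_vanishing_left : ∀ A : 𝒜, P A ↔
    (∀ (X : 𝒜), P X → ∀ (k : ℕ), 1 ≤ k → k ≤ n - 1 → Subsingleton (Abelian.Ext A X k))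
  mem_iff_ext_vanishing_right : ∀ A : 𝒜, P A ↔
    (∀ (X : 𝒜), P X → ∀ (k : ℕ), 1 ≤ k → k ≤ n - 1 → Subsingleton (Abelian.Ext X A k))

end HigherAuslander

namespace CategoryTheory

open Opposite

universe v

section

variable {C : Type u} [Category.{v} C] [Preadditive C]

lemma preadditiveYoneda_obj_app_eq {X : C} {G : Cᵒᵖ ⥤ AddCommGrpCat.{v}}
    (u : preadditiveYoneda.obj X ⟶ G) {Z : C} (φ : Z ⟶ X) :
    u.app (op Z) φ = G.map φ.op (u.app (op X) (𝟙 X)) := by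
  have h : u.app (op Z) (φ ≫ 𝟙 X) = G.map φ.op (u.app (op X) (𝟙 X)) :=
    ConcreteCategory.congr_hom (u.naturality φ.op) (𝟙 X)
  rwa [Category.comp_id] at h

lemma preadditiveYoneda_obj_hom_ext {X : C} {G : Cᵒᵖ ⥤ AddCommGrpCat.{v}}
    {u u' : preadditiveYoneda.obj X ⟶ G} (h : u.app (op X) (𝟙 X) = u'.app (op X) (𝟙 X)) :
    u = u' := by
  ext Z φ
  rw [preadditiveYoneda_obj_app_eq u φ, preadditiveYoneda_obj_app_eq u' φ, h]

lemma cancel_preadditiveYoneda_map {X Y : C} (g : Y ⟶ X) {G : Cᵒᵖ ⥤ AddCommGrpCat.{v}}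
    (hG : Function.Injective (G.map g.op)) {u u' : preadditiveYoneda.obj X ⟶ G}
    (h : preadditiveYoneda.map g ≫ u = preadditiveYoneda.map g ≫ u') : u = u' := by
  refine preadditiveYoneda_obj_hom_ext (hG ?_)
  have hY : u.app (op Y) (𝟙 Y ≫ g) = u'.app (op Y) (𝟙 Y ≫ g) :=
    ConcreteCategory.congr_hom (NatTrans.congr_app h (op Y)) (𝟙 Y)
  rwa [Category.id_comp, preadditiveYoneda_obj_app_eq u g, preadditiveYoneda_obj_app_eq u' g]
    at hY

end

lemma Functor.preservesZeroMorphisms_of_isZero_map {C D : Type*} [Category C] [Category D]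
    [HasZeroMorphisms C] [HasZeroMorphisms D] (F : C ⥤ D) {Z : C} (hZ : IsZero Z)
    (hFZ : IsZero (F.obj Z)) : F.PreservesZeroMorphisms where
  map_zero X Y := by
    rw [← zero_comp (X := X) (f := (0 : Z ⟶ Y)), ← hZ.eq_of_tgt 0 (0 : X ⟶ Z), F.map_comp,
      hFZ.eq_of_tgt (F.map 0) 0, zero_comp]

end CategoryTheory

namespace HigherAuslander

open Opposite ZeroObject

variable {M : Type u} [SmallCategory M] [Preadditive M]

instance (hrep : ∀ X : M, IsAbsolutelyPure M (preadditiveYoneda.obj X)) :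
    (Htilde M hrep).Faithful :=
  inferInstanceAs (ObjectProperty.lift _ preadditiveYoneda hrep).Faithful

lemma epi_htilde_map_iff (hrep : ∀ X : M, IsAbsolutelyPure M (preadditiveYoneda.obj X))
    {X Y : M} (g : Y ⟶ X) : Epi ((Htilde M hrep).map g) ↔ Epi g := by
  refine ⟨fun _ => (Htilde M hrep).epi_of_epi_map ‹_›, fun hg => ⟨fun {Z} u u' h => ?_⟩⟩
  have hZ : Function.Injective (Z.obj.map g.op) :=
    (AddCommGrpCat.mono_iff_injective _).1 (Z.property.2.1 g hg)
  exact InducedCategory.hom_ext (cancel_preadditiveYoneda_map g hZ (congrArg (·.hom) h))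

noncomputable def yonedaModCokernelCofork {X Y : M} (g : Y ⟶ X) (F : ModCat M)
    (i : F.obj ≅ cokernel (preadditiveYoneda.map g)) :
    CokernelCofork ((yonedaMod M).map g) :=
  CokernelCofork.ofπ (ObjectProperty.homMk (cokernel.π _ ≫ i.inv))
    (InducedCategory.hom_ext ((cokernel.condition_assoc _ _).trans zero_comp))

noncomputable def yonedaModCokernelCoforkIsColimit {X Y : M} (g : Y ⟶ X) (F : ModCat M)
    (i : F.obj ≅ cokernel (preadditiveYoneda.map g)) :
    IsColimit (yonedaModCokernelCofork g F i) :=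
  isColimitOfReflects (ObjectProperty.ι _) <|
    ((yonedaModCokernelCofork g F i).isColimitMapCoconeEquiv _).symm <|
      IsColimit.ofIsoColimit (cokernelIsCokernel (preadditiveYoneda.map g))
        (Cofork.ext i.symm rfl)

lemma isZero_obj_iff_epi_map_yonedaMod_map {D : Type*} [Category D] [Preadditive D]
    (V : ModCat M ⥤ D) [V.PreservesZeroMorphisms] {X Y : M} (g : Y ⟶ X)
    [PreservesColimit (parallelPair ((yonedaMod M).map g) 0) V] (F : ModCat M)
    (i : F.obj ≅ cokernel (preadditiveYoneda.map g)) :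
    IsZero (V.obj F) ↔ Epi (V.map ((yonedaMod M).map g)) :=
  (Preadditive.epi_iff_isZero_cokernel' _
    ((yonedaModCokernelCofork g F i).mapIsColimit
      (yonedaModCokernelCoforkIsColimit g F i) V)).symm

theorem statement11_general (M : Type u) [SmallCategory M] [Preadditive M] [HasZeroObject M]
    (hrep : ∀ X : M, IsAbsolutelyPure M (preadditiveYoneda.obj X))
    (V : ModCat M ⥤ L2Cat M) [PreservesFiniteColimits V]
    (e : yonedaMod M ⋙ V ≅ Htilde M hrep) :
    ∀ F : ModCat M, Limits.IsZero (V.obj F) ↔ IsEffaceable M F.obj := by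
  intro F
  have hZ : IsZero ((yonedaMod M).obj 0) := IsZero.of_full_of_faithful_of_isZero
    (ObjectProperty.ι _) _ (preadditiveYoneda.map_isZero (isZero_zero M))
  have : V.PreservesZeroMorphisms :=
    V.preservesZeroMorphisms_of_isZero_map hZ (hZ.isInitial.isInitialObj V).isZero
  have isZero_iff_epi {X Y : M} (g : Y ⟶ X) (i : F.obj ≅ cokernel (preadditiveYoneda.map g)) :
      IsZero (V.obj F) ↔ Epi g :=
    (isZero_obj_iff_epi_map_yonedaMod_map V g F i).trans <|
      ((MorphismProperty.epimorphisms _).arrow_mk_iso_iff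
        (Arrow.isoMk (e.app Y) (e.app X) (e.hom.naturality g).symm)).trans
          (epi_htilde_map_iff hrep g)
  obtain ⟨X, Y, η, ⟨i⟩⟩ := F.property
  obtain ⟨g, rfl⟩ := preadditiveYoneda.map_surjective η
  exact ⟨fun hF => ⟨X, Y, g, (isZero_iff_epi g i).1 hF, ⟨i⟩⟩,
    fun ⟨_, _, f, hf, ⟨j⟩⟩ => (isZero_iff_epi f j).2 hf⟩

/-- For a finitely presented functor `F ∈ mod-M`, `V(F) = 0` if and only if
`F` is effaceable: the kernel of the exact functor `V` is exactly `mod₀-M`. -/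
theorem statement11 (n : ℕ) (hn : 0 < n) (M : Type u) [SmallCategory M] [Preadditive M]
    [HasZeroObject M] [HasBinaryBiproducts M]
    (hM : IsNAbelian M n)
    (hrep : ∀ X : M, IsAbsolutelyPure M (preadditiveYoneda.obj X))
    [Abelian (L2Cat M)] [Abelian (ModCat M)]
    (V : ModCat M ⥤ L2Cat M) [PreservesFiniteColimits V]
    (e : yonedaMod M ⋙ V ≅ Htilde M hrep) :
    ∀ F : ModCat M, Limits.IsZero (V.obj F) ↔ IsEffaceable M F.obj :=
  statement11_general M hrep V e

end HigherAuslander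
end
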